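/- Let A_1,…,A_k be pairwise disjoint subsets of the vertex set of G with 1 ≤ k ≤ s and |A_1| = ⋯ = |A_k| = b. Under the uniform probability measure on Φ_c, the probability that, for each j ∈ [k], all vertices of A_j receive one common color and these k colors are pairwise distinct, equals (k! / n^{(k·b)}) · E_k( c_1^{(b)}, …, c_s^{(b)} ), where E_k is the degree-k elementary symmetric polynomial in s variables and x^{(b)} is the falling factorial. -/

import Mathlib

open Finset MeasureTheory Filter
open scoped Classical

/-- The finset of `c`-colorings of the vertex set `Fin n` with `s` colors:
maps `f : Fin n → Fin s` whose color class of color `i` has exactly `c i` elements. -/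
noncomputable def colorings (n s : ℕ) (c : Fin s → ℕ) : Finset (Fin n → Fin s) :=
  Finset.univ.filter fun f => ∀ i, (Finset.univ.filter fun v => f v = i).card = c i

/-- Probability of an event under the uniform measure on the set of `c`-colorings. -/
noncomputable def colProb (n s : ℕ) (c : Fin s → ℕ) (E : (Fin n → Fin s) → Prop) : ℝ :=
  (((colorings n s c).filter fun f => E f).card : ℝ) / ((colorings n s c).card : ℝ)

/-- Expectation of a real statistic under the uniform measure on `c`-colorings. -/
noncomputable def colExp (n s : ℕ) (c : Fin s → ℕ) (Y : (Fin n → Fin s) → ℝ) : ℝ :=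
  (∑ f ∈ colorings n s c, Y f) / ((colorings n s c).card : ℝ)

/-- Variance of a real statistic under the uniform measure on `c`-colorings. -/
noncomputable def colVar (n s : ℕ) (c : Fin s → ℕ) (Y : (Fin n → Fin s) → ℝ) : ℝ :=
  colExp n s c fun f => (Y f - colExp n s c Y) ^ 2

/-- The number of edges of `G`. -/
noncomputable def edgeCount {n : ℕ} (G : SimpleGraph (Fin n)) : ℕ := G.edgeSet.ncard

/-- `M_i(G)(f)`: the number of edges of `G` whose two endpoints both receive color `i`
under the coloring `f`. -/
noncomputable def monoEdges {n s : ℕ} (G : SimpleGraph (Fin n)) (i : Fin s)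
    (f : Fin n → Fin s) : ℕ :=
  {e ∈ G.edgeSet | ∀ v ∈ e, f v = i}.ncard

/-- `M(G)(f) = ∑ i, M_i(G)(f)`: the total number of monochromatic edges. -/
noncomputable def monoTotal {n s : ℕ} (G : SimpleGraph (Fin n)) (f : Fin n → Fin s) : ℕ :=
  ∑ i, monoEdges G i f

/-- `L(G)(f) = m - M(G)(f)`: the number of bichromatic edges. -/
noncomputable def biEdges {n s : ℕ} (G : SimpleGraph (Fin n)) (f : Fin n → Fin s) : ℝ :=
  (edgeCount G : ℝ) - (monoTotal G f : ℝ)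

/-- `Σ₂(G)`: the sum of the squares of the degrees of `G`. -/
noncomputable def sigma2 {n : ℕ} (G : SimpleGraph (Fin n)) : ℕ :=
  ∑ v, ((G.neighborSet v).ncard) ^ 2

/-- `ζ(G) = √(Σ₂(G)) / m`. -/
noncomputable def zeta {n : ℕ} (G : SimpleGraph (Fin n)) : ℝ :=
  Real.sqrt (sigma2 G) / (edgeCount G : ℝ)

/-- The value of the degree-`k` elementary symmetric polynomial at `(x_1,…,x_s)`. -/
def esymmVal (s : ℕ) (x : Fin s → ℕ) (k : ℕ) : ℕ :=
  ∑ A ∈ Finset.univ.powersetCard k, ∏ i ∈ A, x i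

/-!
Prescribe the colors of some `d` vertices, `d_i` of them with color `i`. The colorings with
class sizes `c` that extend this partial coloring number `(n - d)! / ∏ (c_i - d_i)!`: fixing the
color of one more uncolored vertex yields the multinomial recursion. Dividing by the number
`n! / ∏ c_i!` of all colorings, the partial coloring is extended with probability
`∏ c_i^{(d_i)} / n^{(d)}`.
The event of the theorem is the disjoint union, over injective `g`, of the events that every
vertex of `A_j` gets color `g j`, each of probability `∏_j c_{g j}^{(b)} / n^{(kb)}`; summing over
`g` counts every `k`-set of colors `k!` times.
-/

open scoped Nat
open Function

section PartialColoring

variable {V ι : Type*} [Fintype V]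

theorem sum_card_eq_some_add_card_eq_none [Fintype ι] [DecidableEq ι] (ψ : V → Option ι) :
    ∑ i, #{v | ψ v = some i} + #{v | ψ v = none} = Fintype.card V := by
  rw [← card_univ, card_eq_sum_card_fiberwise (s := univ) (f := ψ) (t := univ) (by simp),
    Fintype.sum_option, add_comm]

variable [DecidableEq V]

theorem card_filter_update_eq_some [DecidableEq ι] {ψ : V → Option ι} {a : V}
    (ha : ψ a = none) (i j : ι) :
    #{v | update ψ a (some i) v = some j}
      = #{v | ψ v = some j} + if i = j then 1 else 0 := by
  split_ifs with hij
  · subst hij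
    have : ({v | update ψ a (some i) v = some i} : Finset V)
        = insert a ({v | ψ v = some i} : Finset V) := by
      ext v; by_cases hv : v = a <;> simp [update_apply, hv]
    rw [this, card_insert_of_notMem (by simp [ha])]
  · congr 1; ext v; by_cases hv : v = a <;> simp [update_apply, hv, hij, ha]

theorem card_filter_update_eq_none {ψ : V → Option ι} {a : V} (ha : ψ a = none) (i : ι) :
    #{v | update ψ a (some i) v = none} + 1 = #{v | ψ v = none} := by
  have : ({v | update ψ a (some i) v = none} : Finset V)
      = ({v | ψ v = none} : Finset V).erase a := by
    ext v; by_cases hv : v = a <;> simp [update_apply, hv]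
  rw [this, card_erase_add_one (by simp [ha])]

variable [Fintype ι] [DecidableEq ι]

theorem prod_factorial_sub_card_filter_update {c : ι → ℕ} {ψ : V → Option ι} {a : V}
    (ha : ψ a = none) {i : ι} (hi : #{v | ψ v = some i} < c i) :
    ∏ j, (c j - #{v | ψ v = some j})!
      = (c i - #{v | ψ v = some i}) * ∏ j, (c j - #{v | update ψ a (some i) v = some j})! := by
  rw [← mul_prod_erase univ _ (mem_univ i),
    ← mul_prod_erase univ (fun j => (c j - #{v | update ψ a (some i) v = some j})!) (mem_univ i),
    ← mul_assoc]
  congr 1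
  · rw [card_filter_update_eq_some ha, if_pos rfl, ← Nat.mul_factorial_pred (by omega),
      Nat.sub_sub]
  · refine prod_congr rfl fun j hj => ?_
    rw [card_filter_update_eq_some ha, if_neg (ne_of_mem_erase hj).symm, add_zero]

def coloringsWith (c : ι → ℕ) : Finset (V → ι) :=
  {f | ∀ i, #{v | f v = i} = c i}

def coloringsExtending (ψ : V → Option ι) (c : ι → ℕ) : Finset (V → ι) :=
  {f ∈ coloringsWith c | ∀ v i, ψ v = some i → f v = i}

theorem coloringsExtending_eq_empty {ψ : V → Option ι} {c : ι → ℕ} {i : ι}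
    (h : c i < #{v | ψ v = some i}) : coloringsExtending ψ c = ∅ := by
  refine eq_empty_of_forall_notMem fun f hf => ?_
  simp only [coloringsExtending, coloringsWith, mem_filter, mem_univ, true_and] at hf
  have : #{v | ψ v = some i} ≤ #{v | f v = i} :=
    card_le_card fun v hv => by simpa using hf.2 v i (by simpa using hv)
  have := hf.1 i
  omega

theorem card_coloringsExtending_eq_sum (ψ : V → Option ι) (c : ι → ℕ) {a : V}
    (ha : ψ a = none) :
    #(coloringsExtending ψ c) = ∑ i, #(coloringsExtending (update ψ a (some i)) c) := by
  rw [card_eq_sum_card_fiberwise (f := fun f => f a) (t := univ) (by simp)]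
  congr! 2 with i
  ext f
  simp only [coloringsExtending, mem_filter, update_apply]
  constructor
  · rintro ⟨⟨hc, hψ⟩, rfl⟩
    refine ⟨hc, fun v j hv => ?_⟩
    split_ifs at hv with hva
    · subst hva; simpa using hv
    · exact hψ v j hv
  · rintro ⟨hc, hψ⟩
    refine ⟨⟨hc, fun v j hv => hψ v j ?_⟩, hψ a i (by simp)⟩
    rwa [if_neg (by rintro rfl; simp_all)]

theorem card_coloringsExtending_eq_one {ψ : V → Option ι} {c : ι → ℕ}
    (hnone : ∀ v, ψ v ≠ none) (hc : ∀ i, #{v | ψ v = some i} = c i) :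
    #(coloringsExtending ψ c) = 1 := by
  have hsome : ∀ v, (ψ v).isSome := fun v => Option.isSome_iff_ne_none.2 (hnone v)
  refine card_eq_one.2
    ⟨fun v => (ψ v).get (hsome v), eq_singleton_iff_unique_mem.2 ⟨?_, ?_⟩⟩
  · simp only [coloringsExtending, coloringsWith, mem_filter, mem_univ, true_and]
    refine ⟨fun i => ?_, fun v i hv => by simp [hv]⟩
    rw [← hc i]
    congr 1; ext v; simp [Option.eq_some_iff_get_eq, hsome v]
  · intro f hf
    funext v
    exact (mem_filter.1 hf).2 v _ (Option.some_get _).symm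

theorem card_coloringsExtending_mul_prod_factorial {c : ι → ℕ}
    (hc : ∑ i, c i = Fintype.card V) (ψ : V → Option ι)
    (hψ : ∀ i, #{v | ψ v = some i} ≤ c i) :
    #(coloringsExtending ψ c) * ∏ i, (c i - #{v | ψ v = some i})! = (#{v | ψ v = none})! := by
  have hsum := sum_card_eq_some_add_card_eq_none ψ
  induction hm : #{v | ψ v = none} generalizing ψ with
  | zero =>
    have hd : ∀ i, #{v | ψ v = some i} = c i := fun i =>
      (sum_eq_sum_iff_of_le fun i _ => hψ i).1 (by omega) i (mem_univ i)
    have hnone : ∀ v, ψ v ≠ none := by simpa [card_eq_zero, filter_eq_empty_iff] using hm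
    simp [card_coloringsExtending_eq_one hnone hd, hd]
  | succ m ih =>
    obtain ⟨a, ha⟩ := card_pos.1 (by omega : 0 < #{v | ψ v = none})
    replace ha : ψ a = none := (mem_filter.1 ha).2
    have hterm : ∀ i, #(coloringsExtending (update ψ a (some i)) c)
        * ∏ j, (c j - #{v | ψ v = some j})! = (c i - #{v | ψ v = some i}) * m ! := by
      intro i
      rcases (hψ i).lt_or_eq with hlt | heq
      · have hψ' : ∀ j, #{v | update ψ a (some i) v = some j} ≤ c j := fun j => by
          rw [card_filter_update_eq_some ha]
          split_ifs with hij
          · subst hij; omega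
          · simpa using hψ j
        rw [← ih _ hψ' (sum_card_eq_some_add_card_eq_none _)
          (by have := card_filter_update_eq_none ha i; omega),
          prod_factorial_sub_card_filter_update ha hlt]
        ring
      · rw [coloringsExtending_eq_empty (i := i)
          (by rw [card_filter_update_eq_some ha]; simp; omega), heq]
        simp
    have htotal : ∑ i, (c i - #{v | ψ v = some i}) = m + 1 := by
      rw [sum_tsub_distrib _ fun i _ => hψ i]; omega
    rw [card_coloringsExtending_eq_sum ψ c ha, sum_mul, sum_congr rfl fun i _ => hterm i,
      ← sum_mul, htotal, Nat.factorial_succ]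

theorem coloringsExtending_none (c : ι → ℕ) :
    coloringsExtending (fun _ : V => none) c = coloringsWith c := by
  simp [coloringsExtending]

theorem card_coloringsWith_mul_prod_factorial {c : ι → ℕ} (hc : ∑ i, c i = Fintype.card V) :
    #(coloringsWith (V := V) c) * ∏ i, (c i)! = (Fintype.card V)! := by
  simpa [coloringsExtending_none] using
    card_coloringsExtending_mul_prod_factorial hc (fun _ => none) (by simp)

theorem card_coloringsExtending_mul_descFactorial {c : ι → ℕ}
    (hc : ∑ i, c i = Fintype.card V) (ψ : V → Option ι) :
    #(coloringsExtending ψ c) * (Fintype.card V).descFactorial (∑ i, #{v | ψ v = some i})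
      = #(coloringsWith (V := V) c) * ∏ i, (c i).descFactorial #{v | ψ v = some i} := by
  by_cases hex : ∃ i, c i < #{v | ψ v = some i}
  · obtain ⟨i, hi⟩ := hex
    rw [coloringsExtending_eq_empty hi,
      prod_eq_zero (mem_univ i) (Nat.descFactorial_eq_zero_iff_lt.2 hi)]
    simp
  have hψ : ∀ i, #{v | ψ v = some i} ≤ c i := fun i => not_lt.1 fun hi => hex ⟨i, hi⟩
  have hd : ∑ i, #{v | ψ v = some i} + #{v | ψ v = none} = Fintype.card V :=
    sum_card_eq_some_add_card_eq_none ψ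
  apply Nat.eq_of_mul_eq_mul_right (prod_pos fun i (_ : i ∈ univ) => (c i).factorial_pos)
  calc _ = #(coloringsExtending ψ c) * (∏ i, (c i - #{v | ψ v = some i})!)
        * (Fintype.card V).descFactorial (∑ i, #{v | ψ v = some i})
        * ∏ i, (c i).descFactorial #{v | ψ v = some i} := by
        rw [prod_congr rfl fun i _ => (Nat.factorial_mul_descFactorial (hψ i)).symm,
          prod_mul_distrib]
        ring
    _ = (Fintype.card V)! * ∏ i, (c i).descFactorial #{v | ψ v = some i} := by
        rw [card_coloringsExtending_mul_prod_factorial hc ψ hψ,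
          ← Nat.factorial_mul_descFactorial
            (by omega : ∑ i, #{v | ψ v = some i} ≤ Fintype.card V)]
        congr 3; omega
    _ = _ := by rw [← card_coloringsWith_mul_prod_factorial hc]; ring

end PartialColoring

section Blocks
variable {V ι κ : Type*} {A : κ → Finset V} {g : κ → ι}

noncomputable def blockColoring (A : κ → Finset V) (g : κ → ι) : V → Option ι :=
  fun v => if h : ∃ j, v ∈ A j then some (g h.choose) else none

theorem blockColoring_eq_some_iff (hA : Pairwise (Disjoint on A)) {v : V} {i : ι} :
    blockColoring A g v = some i ↔ ∃ j, v ∈ A j ∧ g j = i := by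
  unfold blockColoring
  split_ifs with h
  · rw [Option.some.injEq]
    constructor
    · rintro rfl
      exact ⟨_, h.choose_spec, rfl⟩
    · rintro ⟨j, hvj, rfl⟩
      rw [hA.eq (not_disjoint_iff.2 ⟨v, h.choose_spec, hvj⟩)]
  · simp only [false_iff]
    rintro ⟨j, hvj, -⟩
    exact h ⟨j, hvj⟩

variable [Fintype V] [DecidableEq ι]

theorem filter_blockColoring_eq_some (hA : Pairwise (Disjoint on A)) (hg : Injective g)
    (j : κ) : ({v | blockColoring A g v = some (g j)} : Finset V) = A j := by
  ext v
  simp [blockColoring_eq_some_iff hA, hg.eq_iff]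

theorem filter_blockColoring_eq_some_of_notMem_range (hA : Pairwise (Disjoint on A)) {i : ι}
    (hi : i ∉ Set.range g) : ({v | blockColoring A g v = some i} : Finset V) = ∅ := by
  ext v
  simp only [mem_filter, mem_univ, true_and, blockColoring_eq_some_iff hA, notMem_empty,
    iff_false, not_exists, not_and]
  exact fun j _ hj => hi ⟨j, hj⟩

variable [DecidableEq V] [Fintype ι] [Fintype κ]

theorem coloringsExtending_blockColoring (hA : Pairwise (Disjoint on A)) (c : ι → ℕ) :
    coloringsExtending (blockColoring A g) c
      = {f ∈ coloringsWith (V := V) c | ∀ j, ∀ v ∈ A j, f v = g j} := by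
  ext f
  simp only [coloringsExtending, mem_filter, blockColoring_eq_some_iff hA]
  refine and_congr_right fun _ => ⟨fun h j v hv => h v _ ⟨j, hv, rfl⟩, ?_⟩
  rintro h v _ ⟨j, hv, rfl⟩
  exact h j v hv

theorem card_filter_blocks_mul_descFactorial {c : ι → ℕ}
    (hc : ∑ i, c i = Fintype.card V) (hA : Pairwise (Disjoint on A)) (hg : Injective g) :
    #{f ∈ coloringsWith c | ∀ j, ∀ v ∈ A j, f v = g j}
        * (Fintype.card V).descFactorial (∑ j, #(A j))
      = #(coloringsWith (V := V) c) * ∏ j, (c (g j)).descFactorial #(A j) := by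
  have hsum : ∑ j, #(A j) = ∑ i, #{v | blockColoring A g v = some i} :=
    Fintype.sum_of_injective g hg _ _
      (fun i hi => by rw [filter_blockColoring_eq_some_of_notMem_range hA hi, card_empty])
      (fun j => by rw [filter_blockColoring_eq_some hA hg])
  have hprod : ∏ j, (c (g j)).descFactorial #(A j)
      = ∏ i, (c i).descFactorial #{v | blockColoring A g v = some i} :=
    Fintype.prod_of_injective g hg _ _
      (fun i hi => by rw [filter_blockColoring_eq_some_of_notMem_range hA hi, card_empty,
        Nat.descFactorial_zero])
      (fun j => by rw [filter_blockColoring_eq_some hA hg])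
  rw [← coloringsExtending_blockColoring hA, hsum, hprod,
    card_coloringsExtending_mul_descFactorial hc]

end Blocks

section InjectiveSums
variable {ι κ : Type*} [Fintype ι] [DecidableEq ι] [Fintype κ] [DecidableEq κ]

theorem card_filter_injective_image_eq {T : Finset ι} (hT : #T = Fintype.card κ) :
    #{g : κ → ι | Injective g ∧ univ.image g = T} = (Fintype.card κ)! := by
  have e : {g : κ → ι // Injective g ∧ univ.image g = T} ≃ (κ ≃ T) :=
    { toFun := fun g => Equiv.ofBijective (fun j => ⟨g.1 j, by
          have h := mem_image_of_mem g.1 (mem_univ j); rwa [g.2.2] at h⟩)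
        ⟨fun a b h => g.2.1 (congrArg Subtype.val h), fun i => by
          have hi : (i : ι) ∈ univ.image g.1 := by rw [g.2.2]; exact i.2
          obtain ⟨j, -, hj⟩ := mem_image.1 hi
          exact ⟨j, Subtype.ext hj⟩⟩
      invFun := fun e => ⟨fun j => e j, fun a b h => e.injective (Subtype.ext h), by
        ext i
        simp only [mem_image, mem_univ, true_and]
        exact ⟨fun ⟨j, hj⟩ => hj ▸ (e j).2,
          fun hi => ⟨e.symm ⟨i, hi⟩, by simp⟩⟩⟩
      left_inv := fun g => rfl
      right_inv := fun e => by ext; rfl }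
  rw [← Fintype.card_subtype, Fintype.card_congr e,
    Fintype.card_equiv (Fintype.equivOfCardEq (by simp [hT]))]

theorem sum_filter_injective_prod_eq {R : Type*} [CommSemiring R] (x : ι → R) :
    ∑ g ∈ {g : κ → ι | Injective g}, ∏ j, x (g j)
      = (Fintype.card κ)! • ∑ T ∈ powersetCard (Fintype.card κ) univ, ∏ i ∈ T, x i := by
  rw [← sum_fiberwise_of_maps_to (g := fun g => univ.image g)
    (t := powersetCard (Fintype.card κ) univ), smul_sum]
  · refine sum_congr rfl fun T hT => ?_
    rw [sum_congr rfl fun g hg => ?_, sum_const, filter_filter,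
      card_filter_injective_image_eq (mem_powersetCard_univ.1 hT)]
    obtain ⟨hinj, rfl⟩ : Injective g ∧ univ.image g = T := by simpa using hg
    rw [prod_image hinj.injOn]
  · intro g hg
    have hinj : Injective g := by simpa using hg
    simp [card_image_of_injective _ hinj]

end InjectiveSums

section Event
variable {V ι κ : Type*} [Fintype V] [DecidableEq V] [Fintype ι] [DecidableEq ι] [Fintype κ]
  [DecidableEq κ] {A : κ → Finset V}

theorem card_filter_exists_injective (X : Finset (V → ι)) (hne : ∀ j, (A j).Nonempty) :
    #{f ∈ X | ∃ g : κ → ι, Injective g ∧ ∀ j, ∀ v ∈ A j, f v = g j}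
      = ∑ g ∈ {g : κ → ι | Injective g}, #{f ∈ X | ∀ j, ∀ v ∈ A j, f v = g j} := by
  rw [← card_biUnion]
  · congr 1
    ext f
    simp only [mem_filter, mem_biUnion, mem_univ, true_and]
    tauto
  · intro g _ g' _ hgg'
    refine disjoint_left.2 fun f hf hf' => hgg' (funext fun j => ?_)
    obtain ⟨v, hv⟩ := hne j
    simp only [mem_filter] at hf hf'
    rw [← hf.2 j v hv, hf'.2 j v hv]

theorem card_filter_exists_injective_mul_descFactorial {c : ι → ℕ}
    (hc : ∑ i, c i = Fintype.card V) (hA : Pairwise (Disjoint on A)) {b : ℕ} (hb : 0 < b)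
    (hcard : ∀ j, #(A j) = b) :
    #{f ∈ coloringsWith c | ∃ g : κ → ι, Injective g ∧ ∀ j, ∀ v ∈ A j, f v = g j}
        * (Fintype.card V).descFactorial (Fintype.card κ * b)
      = #(coloringsWith (V := V) c) * ((Fintype.card κ)!
          * ∑ T ∈ powersetCard (Fintype.card κ) univ, ∏ i ∈ T, (c i).descFactorial b) := by
  have hsize : ∑ j, #(A j) = Fintype.card κ * b := by simp [hcard]
  rw [card_filter_exists_injective _ fun j => card_pos.1 (hcard j ▸ hb), sum_mul,
    ← smul_eq_mul (Fintype.card κ)!, ← sum_filter_injective_prod_eq, mul_sum]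
  refine sum_congr rfl fun g hg => ?_
  rw [← hsize, card_filter_blocks_mul_descFactorial hc hA (by simpa using hg)]
  simp [hcard]

end Event

theorem colorings_eq_coloringsWith (n s : ℕ) (c : Fin s → ℕ) :
    colorings n s c = coloringsWith c := by
  ext f
  simp [colorings, coloringsWith]

theorem stmt5_general (n s k b : ℕ)
    (c : Fin s → ℕ) (hsum : ∑ i, c i = n)
    (hb : 1 ≤ b)
    (A : Fin k → Finset (Fin n))
    (hdisj : ∀ j j' : Fin k, j ≠ j' → Disjoint (A j) (A j'))
    (hcard : ∀ j, (A j).card = b) :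
    colProb n s c
        (fun f => ∃ g : Fin k → Fin s, Function.Injective g ∧ ∀ j, ∀ v ∈ A j, f v = g j)
      = ((k.factorial : ℝ) / (n.descFactorial (k * b) : ℝ)) *
          (esymmVal s (fun i => (c i).descFactorial b) k : ℝ) := by
  have hc : ∑ i, c i = Fintype.card (Fin n) := by simpa using hsum
  have hA : Pairwise (Disjoint on A) := fun j j' h => hdisj j j' h
  have hkb : k * b ≤ n := by
    simpa [card_biUnion fun j _ j' _ h => hA h, hcard, mul_comm] using
      card_le_univ (univ.biUnion A)
  have hN : #(coloringsWith (V := Fin n) c) ≠ 0 := fun h =>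
    (Fintype.card (Fin n)).factorial_ne_zero <| by
      rw [← card_coloringsWith_mul_prod_factorial hc, h, zero_mul]
  have key := card_filter_exists_injective_mul_descFactorial hc hA hb hcard
  simp only [Fintype.card_fin] at key
  rw [colProb, colorings_eq_coloringsWith, div_mul_eq_mul_div, div_eq_div_iff (by exact_mod_cast hN)
    (by exact_mod_cast Nat.descFactorial_eq_zero_iff_lt.not.2 (by omega)), esymmVal]
  -- the two sides differ in the `Decidable` instances of the filters, which `congr!` identifies
  convert congrArg (Nat.cast : ℕ → ℝ) key using 1
  · push_cast
    congr!
  · push_cast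
    ring

/-- For pairwise disjoint sets `A_1,…,A_k` all of cardinality `b ≥ 1`,
the probability that each `A j` is monochromatic with pairwise distinct colors equals
`(k!/n^{(kb)}) E_k(c_1^{(b)},…,c_s^{(b)})`. -/
theorem stmt5 (n s k b : ℕ) (hs2 : 2 ≤ s) (hsn : s ≤ n)
    (c : Fin s → ℕ) (hpos : ∀ i, 0 < c i) (hsum : ∑ i, c i = n)
    (G : SimpleGraph (Fin n))
    (hk1 : 1 ≤ k) (hks : k ≤ s) (hb : 1 ≤ b)
    (A : Fin k → Finset (Fin n))
    (hdisj : ∀ j j' : Fin k, j ≠ j' → Disjoint (A j) (A j'))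
    (hcard : ∀ j, (A j).card = b) :
    colProb n s c
        (fun f => ∃ g : Fin k → Fin s, Function.Injective g ∧ ∀ j, ∀ v ∈ A j, f v = g j)
      = ((k.factorial : ℝ) / (n.descFactorial (k * b) : ℝ)) *
          (esymmVal s (fun i => (c i).descFactorial b) k : ℝ) :=
  stmt5_general n s k b c hsum hb A hdisj hcard
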